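/- Let δ > 0 and y > 0, set α = iy, and define V(z) = (K(α,z) + K(−α,z)) / (K(α,α) + K(−α,α)), where K(α,α) = sinh(2πyδ)/(2πy) and K(−α,α) = δ. Then |V(t)| ≤ 1 for every t ∈ ℝ if and only if 4·sinh(πδy) ≤ sinh(2πδy) + 2πδy. -/

import Mathlib

open scoped Real

/-- The reproducing kernel `K(ω,z) = sin(πδ(z - conj ω)) / (π(z - conj ω))`,
extended by `K(ω, conj ω) = δ`. -/
noncomputable def Ker (δ : ℝ) (ω z : ℂ) : ℂ :=
  if z = (starRingEnd ℂ) ω then (δ : ℂ)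
  else Complex.sin ((π : ℂ) * (δ : ℂ) * (z - (starRingEnd ℂ) ω)) /
    ((π : ℂ) * (z - (starRingEnd ℂ) ω))

/-!
On the real line `K(-α, t)` is the complex conjugate of `K(α, t)`, so the numerator of `V(t)` is
`2 Re K(α, t)`. From `|sin w|² = sin² (Re w) + sinh² (Im w)` one gets
`|sin w| |Im w| ≤ |sinh (Im w)| |w|`, hence `|K(α, t)| ≤ sinh(πδy) / (πy)`, and `|V(t)| ≤ 1`
follows from `4 sinh(πδy) ≤ sinh(2πδy) + 2πδy`. That inequality holds for all `δ, y > 0`: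
`b ↦ sinh 2b + 2b - 4 sinh b` vanishes at `0` and has derivative `4 cosh b (cosh b - 1) ≥ 0`.
So both sides of the equivalence are true.
-/

namespace Real

theorem four_mul_sinh_le_sinh_two_mul_add {b : ℝ} (hb : 0 ≤ b) :
    4 * sinh b ≤ sinh (2 * b) + 2 * b := by
  let g : ℝ → ℝ := fun x => sinh (2 * x) + 2 * x - 4 * sinh x
  have hg (x : ℝ) : HasDerivAt g (4 * cosh x * (cosh x - 1)) x := by
    refine ((((hasDerivAt_id x).const_mul 2).sinh.add ((hasDerivAt_id x).const_mul 2)).sub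
      ((hasDerivAt_sinh x).const_mul 4)).congr_deriv ?_
    rw [id_eq, cosh_two_mul]
    linear_combination (-2) * cosh_sq x
  have hmono : Monotone g := monotone_of_deriv_nonneg (fun x => (hg x).differentiableAt)
    fun x => (hg x).deriv ▸ mul_nonneg (by positivity) (sub_nonneg.2 (one_le_cosh x))
  have := hmono hb
  simp only [g, mul_zero, sinh_zero, add_zero, sub_zero] at this
  linarith

theorem two_mul_sinh_div_le {δ y : ℝ} (hδ : 0 < δ) (hy : 0 < y) :
    2 * (sinh (π * δ * y) / (π * y)) ≤ sinh (2 * π * δ * y) / (2 * π * y) + δ := by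
  have key := four_mul_sinh_le_sinh_two_mul_add (by positivity : 0 ≤ π * δ * y)
  calc 2 * (sinh (π * δ * y) / (π * y)) = 4 * sinh (π * δ * y) / (2 * π * y) := by
        field_simp; ring
    _ ≤ (sinh (2 * (π * δ * y)) + 2 * (π * δ * y)) / (2 * π * y) := by gcongr
    _ = sinh (2 * π * δ * y) / (2 * π * y) + δ := by field_simp

end Real

namespace Complex

theorem sq_norm_sin (z : ℂ) : ‖sin z‖ ^ 2 = Real.sin z.re ^ 2 + Real.sinh z.im ^ 2 := by
  rw [Complex.sq_norm, normSq_apply, sin_eq z]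
  simp only [← ofReal_sin, ← ofReal_cos, ← ofReal_sinh, ← ofReal_cosh, add_re, add_im, mul_re,
    mul_im, ofReal_re, ofReal_im, I_re, I_im]
  linear_combination Real.sinh z.im ^ 2 * Real.sin_sq_add_cos_sq z.re +
    Real.sin z.re ^ 2 * Real.cosh_sq z.im

theorem norm_sin_mul_abs_im_le (z : ℂ) : ‖sin z‖ * |z.im| ≤ |Real.sinh z.im| * ‖z‖ := by
  have hre : Real.sin z.re ^ 2 ≤ z.re ^ 2 := Real.sin_sq_le_sq
  have him : z.im ^ 2 ≤ Real.sinh z.im ^ 2 := by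
    rw [sq_le_sq, Real.abs_sinh]
    exact Real.self_le_sinh_iff.2 (abs_nonneg _)
  rw [← sq_le_sq₀ (by positivity) (by positivity), mul_pow, mul_pow, sq_norm_sin, sq_abs,
    sq_abs, Complex.sq_norm, normSq_apply]
  nlinarith [mul_le_mul_of_nonneg_right hre (sq_nonneg z.im),
    mul_le_mul_of_nonneg_left him (sq_nonneg z.re)]

end Complex

open Complex ComplexConjugate

theorem Ker_of_eq_conj (δ : ℝ) {ω z : ℂ} (h : z = conj ω) : Ker δ ω z = δ := if_pos h

theorem Ker_self (δ : ℝ) {ω : ℂ} (h : ω.im ≠ 0) :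
    Ker δ ω ω = ((Real.sinh (2 * π * δ * ω.im) / (2 * π * ω.im) : ℝ) : ℂ) := by
  rw [Ker, if_neg (mt conj_eq_iff_im.1 h ∘ Eq.symm), sub_conj]
  have hnum : (π : ℂ) * δ * ((2 * ω.im : ℝ) * I) = ((2 * π * δ * ω.im : ℝ) : ℂ) * I := by
    push_cast; ring
  have hden : (π : ℂ) * ((2 * ω.im : ℝ) * I) = ((2 * π * ω.im : ℝ) : ℂ) * I := by
    push_cast; ring
  rw [hnum, hden, sin_mul_I, ← ofReal_sinh, mul_div_mul_right _ _ I_ne_zero, ofReal_div]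

theorem Ker_add_Ker_conj_self (δ : ℝ) {ω : ℂ} (h : ω.im ≠ 0) :
    Ker δ ω ω + Ker δ (conj ω) ω =
      ((Real.sinh (2 * π * δ * ω.im) / (2 * π * ω.im) + δ : ℝ) : ℂ) := by
  rw [Ker_self δ h, Ker_of_eq_conj δ (conj_conj ω).symm, ofReal_add]

theorem Ker_conj_ofReal (δ : ℝ) (ω : ℂ) (t : ℝ) : Ker δ (conj ω) t = conj (Ker δ ω t) := by
  have : (t : ℂ) = ω ↔ (t : ℂ) = conj ω := by
    constructor <;> intro h
    · rw [← h, conj_ofReal]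
    · rw [← conj_conj ω, ← h, conj_ofReal]
  simp only [Ker, conj_conj, ← this]
  split_ifs <;> simp [map_div₀, ← sin_conj]

theorem Ker_add_Ker_conj_ofReal (δ : ℝ) (ω : ℂ) (t : ℝ) :
    Ker δ ω t + Ker δ (conj ω) t = ((2 * (Ker δ ω t).re : ℝ) : ℂ) := by
  rw [Ker_conj_ofReal, add_conj]

theorem norm_Ker_le (δ : ℝ) {ω z : ℂ} (h : z.im + ω.im ≠ 0) :
    ‖Ker δ ω z‖ ≤ |Real.sinh (π * δ * (z.im + ω.im))| / (π * |z.im + ω.im|) := by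
  set u := z - conj ω with hu
  have hu_im : u.im = z.im + ω.im := by simp [u]
  have hu0 : u ≠ 0 := fun h0 => h (by rw [← hu_im, h0, zero_im])
  rw [Ker, if_neg (sub_ne_zero.1 hu0), ← hu, ← hu_im, norm_div, norm_mul, norm_real,
    Real.norm_of_nonneg Real.pi_pos.le, div_le_div_iff₀ (mul_pos Real.pi_pos (norm_pos_iff.2 hu0))
      (mul_pos Real.pi_pos (abs_pos.2 (hu_im ▸ h)))]
  rcases eq_or_ne δ 0 with rfl | hδ
  · simp
  have := norm_sin_mul_abs_im_le (((π * δ : ℝ) : ℂ) * u)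
  simp only [im_ofReal_mul, norm_mul, norm_real, Real.norm_eq_abs, abs_mul,
    abs_of_pos Real.pi_pos] at this
  push_cast at this
  refine le_of_mul_le_mul_left ?_ (abs_pos.2 hδ)
  linarith

theorem stmt15 (δ y : ℝ) (hδ : 0 < δ) (hy : 0 < y)
    (α : ℂ) (hα : α = (y : ℂ) * Complex.I)
    (V : ℂ → ℂ)
    (hV : V = fun z => (Ker δ α z + Ker δ (-α) z) / (Ker δ α α + Ker δ (-α) α)) :
    (∀ t : ℝ, ‖V t‖ ≤ 1) ↔
      4 * Real.sinh (π * δ * y) ≤ Real.sinh (2 * π * δ * y) + 2 * π * δ * y := by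
  subst hα hV
  have hb : 0 < π * δ * y := by positivity
  refine ⟨fun _ => by simpa only [mul_assoc] using Real.four_mul_sinh_le_sinh_two_mul_add hb.le,
    fun _ t => ?_⟩
  have hy_im : ((y : ℂ) * I).im = y := by simp
  have hK : ‖Ker δ (y * I) t‖ ≤ Real.sinh (π * δ * y) / (π * y) := by
    simpa [abs_of_pos hb, abs_of_pos hy, abs_of_pos (Real.sinh_pos_iff.2 hb)] using
      norm_Ker_le δ (ω := y * I) (z := t) (by simpa using hy.ne')
  have hD_pos : 0 < Real.sinh (2 * π * δ * y) / (2 * π * y) + δ := by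
    have := Real.sinh_pos_iff.2 (by positivity : 0 < 2 * π * δ * y)
    positivity
  have hconj : -((y : ℂ) * I) = conj ((y : ℂ) * I) := by simp [conj_ofReal]
  dsimp only
  rw [hconj, Ker_add_Ker_conj_ofReal, Ker_add_Ker_conj_self δ (by simpa using hy.ne'), hy_im,
    ← ofReal_div, norm_real, Real.norm_eq_abs, abs_div, abs_of_pos hD_pos, div_le_one hD_pos,
    abs_mul, abs_two]
  calc 2 * |(Ker δ (y * I) t).re| ≤ 2 * ‖Ker δ (y * I) t‖ := by gcongr; exact abs_re_le_norm _
    _ ≤ 2 * (Real.sinh (π * δ * y) / (π * y)) := by gcongr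
    _ ≤ _ := Real.two_mul_sinh_div_le hδ hy
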